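/- arXiv:2511.02154 — 4 statements merged into one kernel-verified Lean document; each statement's English description precedes it below -/
import Mathlib

section
/- Let m ∈ ℕ, s,t,r ∈ ℂ, f ∈ C²(0,1), and u(z) = f(|z|²)·zᵐ on 𝔻 \ {0}. Then (∂∂̄ − s z∂ − t z̄∂̄ − r)u(z) = zᵐ·(T f)(|z|²) for all z ∈ 𝔻 \ {0}, where (T f)(x) = x f''(x) + (m+1−(s+t)x) f'(x) − (r+sm) f(x). -/
open Complex

noncomputable def wDz (f : ℂ → ℂ) (z : ℂ) : ℂ :=
  (fderiv ℝ f z 1 - Complex.I * fderiv ℝ f z Complex.I) / 2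

noncomputable def wDzbar (f : ℂ → ℂ) (z : ℂ) : ℂ :=
  (fderiv ℝ f z 1 + Complex.I * fderiv ℝ f z Complex.I) / 2

/-- The operator M_{s,t,r} = ∂∂̄ − s·z∂ − t·z̄∂̄ − r applied to u at z. -/
noncomputable def Mstr (s t r : ℂ) (u : ℂ → ℂ) (z : ℂ) : ℂ :=
  wDz (wDzbar u) z - s * z * wDz u z - t * (starRingEnd ℂ) z * wDzbar u z - r * u z

lemma hasFDerivAt_sqAbs (z : ℂ) : HasFDerivAt (fun w : ℂ => ‖w‖ ^ 2)
    ((Complex.reCLM.smulRight (2*z.re) + Complex.imCLM.smulRight (2*z.im)) : ℂ →L[ℝ] ℝ) z := by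
  have h1 := (Complex.reCLM.hasFDerivAt (x := z)).mul (Complex.reCLM.hasFDerivAt (x := z))
  have h2 := (Complex.imCLM.hasFDerivAt (x := z)).mul (Complex.imCLM.hasFDerivAt (x := z))
  have h := h1.add h2
  simp only [Complex.reCLM_apply, Complex.imCLM_apply] at h
  convert h using 1
  all_goals first | rfl | skip
  · funext w; simp [← Complex.normSq_apply, Complex.sq_norm]
  · ext v <;> simp [smul_eq_mul] <;> ring

lemma keyFD (g : ℝ → ℂ) (z : ℂ) (hg : DifferentiableAt ℝ g (‖z‖ ^ 2)) (n : ℕ) :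
    wDz (fun w => g (‖w‖ ^ 2) * w ^ n) z
      = deriv g (‖z‖ ^ 2) * (starRingEnd ℂ) z * z ^ n
        + g (‖z‖ ^ 2) * n * z ^ (n-1) ∧
    wDzbar (fun w => g (‖w‖ ^ 2) * w ^ n) z
      = deriv g (‖z‖ ^ 2) * z * z ^ n := by
  have hc := (hg.hasDerivAt.hasFDerivAt).comp z (hasFDerivAt_sqAbs z)
  simp only [Function.comp_def] at hc
  have hp := ((hasDerivAt_pow n z).hasFDerivAt).restrictScalars ℝ
  have hG := hc.mul hp
  simp only [Pi.mul_def] at hG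
  constructor
  · unfold wDz
    rw [hG.fderiv]
    simp [smul_eq_mul, Complex.real_smul]
    have hconj : (starRingEnd ℂ) z = (z.re : ℂ) - z.im * Complex.I := by
      simp [Complex.ext_iff]
    rw [hconj]
    linear_combination (- g (‖z‖^2) * n * z^(n-1)/2) * Complex.I_sq
  · unfold wDzbar
    rw [hG.fderiv]
    simp [smul_eq_mul, Complex.real_smul]
    linear_combination (g (‖z‖^2) * n * z^(n-1)/2) * Complex.I_sq
      + (deriv g (‖z‖^2) * z^n) * (Complex.re_add_im z)

lemma wDz_congr {p q : ℂ → ℂ} {z : ℂ} (h : p =ᶠ[nhds z] q) : wDz p z = wDz q z := by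
  unfold wDz; rw [h.fderiv_eq]

theorem Mstr_on_homogeneous
    (m : ℕ) (s t r : ℂ) (f : ℝ → ℂ) (hf : ContDiffOn ℝ 2 f (Set.Ioo 0 1))
    (u : ℂ → ℂ) (hu : ∀ z : ℂ, u z = f (‖z‖ ^ 2) * z ^ m)
    (z : ℂ) (hz : z ∈ Metric.ball (0 : ℂ) 1 \ {0}) :
    Mstr s t r u z =
      z ^ m * (((‖z‖ ^ 2 : ℝ) : ℂ) * deriv (deriv f) (‖z‖ ^ 2) +
        ((m : ℂ) + 1 - (s + t) * ((‖z‖ ^ 2 : ℝ) : ℂ)) * deriv f (‖z‖ ^ 2) -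
        (r + s * m) * f (‖z‖ ^ 2)) := by
  have hufun : u = fun w => f (‖w‖ ^ 2) * w ^ m := funext hu
  set U : Set ℂ := Metric.ball (0 : ℂ) 1 \ {0} with hUdef
  have hU : IsOpen U := Metric.isOpen_ball.sdiff isClosed_singleton
  have hmem : ∀ w ∈ U, ‖w‖ ^ 2 ∈ Set.Ioo (0:ℝ) 1 := by
    intro w hw
    obtain ⟨hb, h0⟩ := hw
    have hw0 : w ≠ 0 := h0
    have habs : ‖w‖ < 1 := by
      simpa [Complex.dist_eq] using hb
    constructor
    · exact pow_pos (norm_pos_iff.mpr hw0) 2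
    · exact pow_lt_one₀ (norm_nonneg w) habs (by norm_num)
  have hf1 : ∀ x ∈ Set.Ioo (0:ℝ) 1, DifferentiableAt ℝ f x := by
    intro x hx
    exact (hf.differentiableOn (by norm_num)).differentiableAt (isOpen_Ioo.mem_nhds hx)
  have hfd : ContDiffOn ℝ 1 (deriv f) (Set.Ioo (0:ℝ) 1) :=
    hf.deriv_of_isOpen isOpen_Ioo (by norm_num)
  have hf2 : ∀ x ∈ Set.Ioo (0:ℝ) 1, DifferentiableAt ℝ (deriv f) x := by
    intro x hx
    exact (hfd.differentiableOn (by norm_num)).differentiableAt (isOpen_Ioo.mem_nhds hx)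
  have hval : ∀ w ∈ U, wDzbar u w = deriv f (‖w‖ ^ 2) * w ^ (m+1) := by
    intro w hw
    rw [hufun]
    rw [(keyFD f w (hf1 _ (hmem w hw)) m).2]
    ring
  have hzU : z ∈ U := hz
  have ha : ‖z‖ ^ 2 ∈ Set.Ioo (0:ℝ) 1 := hmem z hzU
  have hEq : wDzbar u =ᶠ[nhds z] (fun w => deriv f (‖w‖ ^ 2) * w ^ (m+1)) := by
    filter_upwards [hU.mem_nhds hzU] with w hw
    exact hval w hw
  have h1 : wDz (wDzbar u) z
      = deriv (deriv f) (‖z‖ ^ 2) * (starRingEnd ℂ) z * z ^ (m+1)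
        + deriv f (‖z‖ ^ 2) * (m+1) * z ^ m := by
    rw [wDz_congr hEq, (keyFD (deriv f) z (hf2 _ ha) (m+1)).1]
    norm_num
  have h2 : wDz u z
      = deriv f (‖z‖ ^ 2) * (starRingEnd ℂ) z * z ^ m
        + f (‖z‖ ^ 2) * m * z ^ (m-1) := by
    rw [hufun]; exact (keyFD f z (hf1 _ ha) m).1
  have h3 := hval z hzU
  have hcz : (starRingEnd ℂ) z * z = ((‖z‖ ^ 2 : ℝ) : ℂ) := by
    rw [mul_comm, Complex.mul_conj]
    norm_cast
    exact (Complex.sq_norm z).symm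
  have hzm : (m:ℂ) * z ^ (m-1) * z = m * z ^ m := by
    cases m with
    | zero => simp
    | succ k => simp [pow_succ]; ring
  unfold Mstr
  rw [h1, h2, h3, hu z]
  linear_combination (deriv (deriv f) (‖z‖ ^ 2) * z^m
      - t * deriv f (‖z‖ ^ 2) * z^m
      - s * deriv f (‖z‖ ^ 2) * z^m) * hcz
    + (- s * f (‖z‖ ^ 2)) * hzm
end

section
/- Let Θ(m+1,z) = Σ_{k=0}^∞ zᵏ/((m+1)ₖ k!) for m ∈ ℕ and let λ ∈ ℂ. Then d/dz ( z^{m+1} · d/dz Θ(m+1, λz) ) = λ · zᵐ · Θ(m+1, λz) for all z ∈ ℂ. -/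
/-- Θ(m+1,z) = Σ_k zᵏ/((m+1)ₖ·k!), indexed here by m. -/
noncomputable def Theta (m : ℕ) (z : ℂ) : ℂ :=
  ∑' k : ℕ, z ^ k / ((∏ j ∈ Finset.range k, ((m : ℂ) + 1 + j)) * (Nat.factorial k : ℂ))

open Metric
open scoped Nat

private lemma summable_nat_mul_pow_div_factorial {x : ℝ} (hx : 0 ≤ x) :
    Summable (fun n : ℕ => (n : ℝ) * x ^ n / n !) := by
  refine Summable.of_nonneg_of_le (fun n => by positivity) (fun n => ?_)
    (Real.summable_pow_div_factorial (2 * x))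
  calc (n : ℝ) * x ^ n / n ! ≤ (2 : ℝ) ^ n * x ^ n / n ! := by
        gcongr
        exact_mod_cast (Nat.lt_two_pow_self (n := n)).le
    _ = (2 * x) ^ n / n ! := by rw [mul_pow]

private lemma summable_key (a : ℕ → ℂ) (C D : ℝ) (hC : 0 ≤ C)
    (ha : ∀ n, ‖a n‖ ≤ D * C ^ n / n !) (z : ℂ) :
    Summable (fun k : ℕ => a k * z ^ k) := by
  refine Summable.of_norm_bounded (g := fun n => D * (C * ‖z‖) ^ n / n !)
    (((Real.summable_pow_div_factorial (C * ‖z‖)).mul_left D).congr fun n => by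
      rw [mul_div_assoc]) (fun n => ?_)
  rw [norm_mul, norm_pow]
  calc ‖a n‖ * ‖z‖ ^ n ≤ (D * C ^ n / n !) * ‖z‖ ^ n := by
        gcongr; exact ha n
    _ = D * (C * ‖z‖) ^ n / n ! := by rw [mul_pow]; ring

private lemma key (a : ℕ → ℂ) (C D : ℝ) (hC : 0 ≤ C)
    (ha : ∀ n, ‖a n‖ ≤ D * C ^ n / n !) (z : ℂ) :
    HasDerivAt (fun w : ℂ => ∑' k : ℕ, a k * w ^ k)
      (∑' k : ℕ, ((k : ℂ) + 1) * a (k + 1) * z ^ k) z := by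
  have hD : 0 ≤ D := by
    have h0 := ha 0
    simp only [pow_zero, Nat.factorial_zero, Nat.cast_one, mul_one, div_one] at h0
    exact le_trans (norm_nonneg _) h0
  set R : ℝ := ‖z‖ + 1 with hR
  have hR1 : (1 : ℝ) ≤ R := hR ▸ le_add_of_nonneg_left (norm_nonneg z)
  have hR0 : (0 : ℝ) < R := lt_of_lt_of_le one_pos hR1
  set u : ℕ → ℝ := fun n => (n : ℝ) * (D * C ^ n / n !) * R ^ n with hu_def
  have hbound : ∀ (n : ℕ) (y : ℂ), y ∈ ball (0 : ℂ) R →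
      ‖(n : ℂ) * a n * y ^ (n - 1)‖ ≤ u n := by
    intro n y hy
    have hyR : ‖y‖ ≤ R := by
      simpa [dist_eq_norm] using (mem_ball.mp hy).le
    have h1 : ‖(n : ℂ) * a n * y ^ (n - 1)‖ = (n : ℝ) * ‖a n‖ * ‖y‖ ^ (n - 1) := by
      simp [norm_mul, norm_pow]
    rw [h1, hu_def]
    calc (n : ℝ) * ‖a n‖ * ‖y‖ ^ (n - 1)
        ≤ (n : ℝ) * (D * C ^ n / n !) * R ^ (n - 1) := by
          gcongr
          exact ha n
      _ ≤ (n : ℝ) * (D * C ^ n / n !) * R ^ n :=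
          mul_le_mul_of_nonneg_left (pow_le_pow_right₀ hR1 (Nat.sub_le n 1))
            (by positivity)
  have hu : Summable u := by
    refine ((summable_nat_mul_pow_div_factorial (x := C * R)
      (by positivity)).mul_left D).congr fun n => ?_
    rw [hu_def]; simp only [mul_pow]; ring
  have hmain : HasDerivAt (fun w : ℂ => ∑' k : ℕ, a k * w ^ k)
      (∑' n : ℕ, (n : ℂ) * a n * z ^ (n - 1)) z := by
    refine hasDerivAt_tsum_of_isPreconnected hu isOpen_ball
      ((convex_ball (0 : ℂ) R).isPreconnected) (fun n y _ => ?_) hbound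
      (mem_ball_self hR0) ?_ ?_
    · simpa [mul_comm, mul_assoc, mul_left_comm] using
        (hasDerivAt_pow n y).const_mul (a n)
    · refine summable_of_ne_finset_zero (s := {0}) fun n hn => ?_
      have : n ≠ 0 := by simpa using hn
      simp [zero_pow this]
    · simp only [mem_ball, dist_eq_norm, sub_zero, hR]
      linarith
  have hsum : Summable fun n : ℕ => (n : ℂ) * a n * z ^ (n - 1) := by
    refine Summable.of_norm_bounded (g := u) hu fun n => hbound n z ?_
    simp [mem_ball, dist_eq_norm, hR]
  have heq : (∑' n : ℕ, (n : ℂ) * a n * z ^ (n - 1)) =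
      ∑' k : ℕ, ((k : ℂ) + 1) * a (k + 1) * z ^ k := by
    rw [Summable.tsum_eq_zero_add hsum]
    push_cast
    simp
  rw [heq] at hmain
  exact hmain

noncomputable def Pc (m : ℕ) (k : ℕ) : ℂ := ∏ j ∈ Finset.range k, ((m : ℂ) + 1 + j)

noncomputable def Ac (m : ℕ) (lam : ℂ) (k : ℕ) : ℂ := lam ^ k / (Pc m k * k !)

noncomputable def Bc (m : ℕ) (lam : ℂ) (k : ℕ) : ℂ := lam ^ (k + 1) / (Pc m (k + 1) * k !)

lemma Pc_eq_nat (m k : ℕ) : Pc m k = ((∏ j ∈ Finset.range k, (m + 1 + j) : ℕ) : ℂ) := by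
  rw [Pc]
  push_cast
  rfl

lemma Pc_norm_ge (m k : ℕ) : (1 : ℝ) ≤ ‖Pc m k‖ := by
  rw [Pc_eq_nat, Complex.norm_natCast]
  have : 1 ≤ ∏ j ∈ Finset.range k, (m + 1 + j) :=
    Nat.one_le_iff_ne_zero.mpr (by positivity)
  exact_mod_cast this

lemma Pc_ne_zero (m k : ℕ) : Pc m k ≠ 0 := by
  intro h
  have := Pc_norm_ge m k
  rw [h] at this
  simp only [norm_zero] at this
  linarith

lemma Pc_succ (m k : ℕ) : Pc m (k + 1) = Pc m k * ((m : ℂ) + 1 + k) := by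
  rw [Pc, Pc, Finset.prod_range_succ]

lemma Ac_norm (m : ℕ) (lam : ℂ) (k : ℕ) : ‖Ac m lam k‖ ≤ 1 * ‖lam‖ ^ k / k ! := by
  rw [Ac, norm_div, norm_mul, norm_pow, one_mul, Complex.norm_natCast]
  have h1 : (0 : ℝ) < k ! := by positivity
  have h2 : (k ! : ℝ) ≤ ‖Pc m k‖ * k ! := le_mul_of_one_le_left h1.le (Pc_norm_ge m k)
  exact div_le_div_of_nonneg_left (by positivity) h1 h2

lemma Bc_norm (m : ℕ) (lam : ℂ) (k : ℕ) : ‖Bc m lam k‖ ≤ ‖lam‖ * ‖lam‖ ^ k / k ! := by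
  rw [Bc, norm_div, norm_mul, norm_pow, Complex.norm_natCast, pow_succ, mul_comm (‖lam‖ ^ k)]
  have h1 : (0 : ℝ) < k ! := by positivity
  have h2 : (k ! : ℝ) ≤ ‖Pc m (k + 1)‖ * k ! := le_mul_of_one_le_left h1.le (Pc_norm_ge m _)
  exact div_le_div_of_nonneg_left (by positivity) h1 h2

lemma Bc_eq (m : ℕ) (lam : ℂ) (k : ℕ) : ((k : ℂ) + 1) * Ac m lam (k + 1) = Bc m lam k := by
  rw [Ac, Bc, Nat.factorial_succ]
  have h1 : Pc m (k + 1) ≠ 0 := Pc_ne_zero m _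
  have h2 : ((k ! : ℕ) : ℂ) ≠ 0 := Nat.cast_ne_zero.mpr (Nat.factorial_ne_zero k)
  have h3 : ((k : ℂ) + 1) ≠ 0 := by
    have : ((k + 1 : ℕ) : ℂ) ≠ 0 := Nat.cast_ne_zero.mpr (Nat.succ_ne_zero k)
    push_cast at this
    exact this
  field_simp
  push_cast
  ring

lemma Bc_rec (m : ℕ) (lam : ℂ) (k : ℕ) :
    ((m : ℂ) + 1 + k) * Bc m lam k = lam * Ac m lam k := by
  rw [Ac, Bc, Pc_succ]
  have h1 : Pc m k ≠ 0 := Pc_ne_zero m k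
  have h2 : ((k ! : ℕ) : ℂ) ≠ 0 := Nat.cast_ne_zero.mpr (Nat.factorial_ne_zero k)
  have h3 : ((m : ℂ) + 1 + k) ≠ 0 := by
    have : (((m + 1 + k : ℕ)) : ℂ) ≠ 0 := Nat.cast_ne_zero.mpr (by omega)
    push_cast at this
    exact this
  field_simp
  ring

lemma Theta_eq (m : ℕ) (lam v : ℂ) : Theta m (lam * v) = ∑' k : ℕ, Ac m lam k * v ^ k := by
  rw [Theta]
  refine tsum_congr fun k => ?_
  rw [Ac, Pc, mul_pow, mul_div_right_comm]

theorem Theta_sturm_liouville (m : ℕ) (lam : ℂ) (z : ℂ) :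
    deriv (fun w : ℂ => w ^ (m + 1) * deriv (fun v : ℂ => Theta m (lam * v)) w) z =
      lam * z ^ m * Theta m (lam * z) := by
  have hA : ∀ k, ‖Ac m lam k‖ ≤ 1 * ‖lam‖ ^ k / k ! := Ac_norm m lam
  have hB : ∀ k, ‖Bc m lam k‖ ≤ ‖lam‖ * ‖lam‖ ^ k / k ! := Bc_norm m lam
  set g : ℂ → ℂ := fun w => ∑' k : ℕ, Bc m lam k * w ^ k with hg_def
  have hgderiv : ∀ w : ℂ, HasDerivAt (fun v : ℂ => Theta m (lam * v)) (g w) w := by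
    intro w
    have h1 : (fun v : ℂ => Theta m (lam * v)) = fun v : ℂ => ∑' k : ℕ, Ac m lam k * v ^ k :=
      funext fun v => Theta_eq m lam v
    rw [h1, hg_def]
    have h2 := key (Ac m lam) ‖lam‖ 1 (norm_nonneg lam) hA w
    have h3 : (∑' k : ℕ, ((k : ℂ) + 1) * Ac m lam (k + 1) * w ^ k)
        = ∑' k : ℕ, Bc m lam k * w ^ k := tsum_congr fun k => by rw [Bc_eq]
    rwa [h3] at h2
  have hderiv_eq : deriv (fun v : ℂ => Theta m (lam * v)) = g :=
    funext fun w => (hgderiv w).deriv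
  rw [hderiv_eq]
  have h2 : HasDerivAt g (∑' k : ℕ, ((k : ℂ) + 1) * Bc m lam (k + 1) * z ^ k) z :=
    key (Bc m lam) ‖lam‖ ‖lam‖ (norm_nonneg lam) hB z
  have h3 : deriv (fun w : ℂ => w ^ (m + 1) * g w) z = _ := ((hasDerivAt_pow (m + 1) z).mul h2).deriv
  simp only [Nat.add_sub_cancel] at h3
  rw [h3, Theta_eq m lam z]
  -- summability facts
  have hsumB : Summable (fun k : ℕ => Bc m lam k * z ^ k) :=
    summable_key (Bc m lam) ‖lam‖ ‖lam‖ (norm_nonneg lam) hB z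
  have hsum1 : Summable (fun k : ℕ => ((m : ℂ) + 1) * Bc m lam k * z ^ (k + m)) := by
    refine ((hsumB.mul_left (((m : ℂ) + 1) * z ^ m)).congr fun k => ?_)
    rw [pow_add]; ring
  have hsumkB : Summable (fun k : ℕ => (k : ℂ) * Bc m lam k * z ^ k) := by
    refine summable_key (fun k => (k : ℂ) * Bc m lam k) (2 * ‖lam‖) ‖lam‖
      (by positivity) (fun k => ?_) z
    rw [norm_mul, Complex.norm_natCast]
    calc (k : ℝ) * ‖Bc m lam k‖ ≤ (2 : ℝ) ^ k * (‖lam‖ * ‖lam‖ ^ k / k !) := by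
          gcongr
          · exact_mod_cast (Nat.lt_two_pow_self (n := k)).le
          · exact hB k
      _ = ‖lam‖ * (2 * ‖lam‖) ^ k / k ! := by rw [mul_pow]; ring
  have hsum2 : Summable (fun k : ℕ => (k : ℂ) * Bc m lam k * z ^ (k + m)) := by
    refine ((hsumkB.mul_left (z ^ m)).congr fun k => ?_)
    rw [pow_add]; ring
  have e1 : ((m : ℂ) + 1) * z ^ m * g z = ∑' k : ℕ, ((m : ℂ) + 1) * Bc m lam k * z ^ (k + m) := by
    rw [hg_def, ← tsum_mul_left]
    exact tsum_congr fun k => by rw [pow_add]; ring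
  have e2 : z ^ (m + 1) * (∑' k : ℕ, ((k : ℂ) + 1) * Bc m lam (k + 1) * z ^ k)
      = ∑' k : ℕ, (k : ℂ) * Bc m lam k * z ^ (k + m) := by
    rw [← tsum_mul_left, Summable.tsum_eq_zero_add hsum2]
    push_cast
    rw [zero_mul, zero_mul, zero_add]
    exact tsum_congr fun k => by ring
  calc ((m + 1 : ℕ) : ℂ) * z ^ m * g z
        + z ^ (m + 1) * (∑' k : ℕ, ((k : ℂ) + 1) * Bc m lam (k + 1) * z ^ k)
      = (∑' k : ℕ, ((m : ℂ) + 1) * Bc m lam k * z ^ (k + m))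
        + ∑' k : ℕ, (k : ℂ) * Bc m lam k * z ^ (k + m) := by
        rw [← e1, ← e2]; push_cast; ring
    _ = ∑' k : ℕ, (((m : ℂ) + 1) * Bc m lam k * z ^ (k + m)
          + (k : ℂ) * Bc m lam k * z ^ (k + m)) := (Summable.tsum_add hsum1 hsum2).symm
    _ = ∑' k : ℕ, lam * Ac m lam k * z ^ (k + m) := by
        refine tsum_congr fun k => ?_
        have := Bc_rec m lam k
        linear_combination z ^ (k + m) * this
    _ = lam * z ^ m * ∑' k : ℕ, Ac m lam k * z ^ k := by
        rw [← tsum_mul_left]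
        exact tsum_congr fun k => by rw [pow_add]; ring
end

section
/- Let s,t,r ∈ ℂ and define 𝒫(r+sm, s+t | m+1; z) = Σ_{k=0}^∞ (r+sm, s+t)ₖ/((m+1)ₖ k!) · zᵏ for m ∈ ℕ, with (x,y)ₖ the generalized Pochhammer symbol. Then |𝒫(r+sm, s+t | m+1; z)| ≤ exp((|r|+|s|+|s+t|)·|z|) for all z ∈ ℂ and all m ∈ ℕ. -/
/-- Generalized Pochhammer symbol (x,y)ₙ = ∏_{j=0}^{n−1} (x + j·y). -/
noncomputable def genPoch (x y : ℂ) (n : ℕ) : ℂ :=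
  ∏ j ∈ Finset.range n, (x + (j : ℂ) * y)

/-- 𝒫(r+sm, s+t | m+1; z) = Σ_k (r+sm,s+t)ₖ/((m+1)ₖ·k!)·zᵏ. -/
noncomputable def calP (s t r : ℂ) (m : ℕ) (z : ℂ) : ℂ :=
  ∑' k : ℕ, genPoch (r + s * m) (s + t) k / (genPoch ((m : ℂ) + 1) 1 k * (Nat.factorial k : ℂ))
      * z ^ k

open Finset

lemma genPoch_nat (m k : ℕ) :
    genPoch ((m : ℂ) + 1) 1 k = ((∏ j ∈ range k, (m + 1 + j) : ℕ) : ℂ) := by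
  rw [genPoch, Nat.cast_prod]
  refine Finset.prod_congr rfl fun j _ => ?_
  push_cast; ring

theorem calP_bound (s t r : ℂ) (m : ℕ) (z : ℂ) :
    ‖calP s t r m z‖ ≤
      Real.exp ((‖r‖ + ‖s‖ + ‖s + t‖) * ‖z‖) := by
  set a := ‖r‖
  set b := ‖s‖
  set c := ‖s + t‖
  have ha : 0 ≤ a := norm_nonneg _
  have hb : 0 ≤ b := norm_nonneg _
  have hc : 0 ≤ c := norm_nonneg _
  have hz : 0 ≤ ‖z‖ := norm_nonneg _
  set x := (a + b + c) * ‖z‖ with hx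
  have hsum : HasSum (fun k : ℕ => x ^ k / (Nat.factorial k : ℝ)) (Real.exp x) := by
    rw [Real.exp_eq_exp_ℝ]
    exact NormedSpace.expSeries_div_hasSum_exp x
  rw [calP]
  refine tsum_of_norm_bounded hsum fun k => ?_
  -- bound each term
  have hP : (0 : ℕ) < ∏ j ∈ range k, (m + 1 + j) :=
    Finset.prod_pos fun j _ => by omega
  have hnum : ‖genPoch (r + s * m) (s + t) k‖ ≤
      ((∏ j ∈ range k, (m + 1 + j) : ℕ) : ℝ) * (a + b + c) ^ k := by
    have hpow : (a + b + c) ^ k = ∏ _j ∈ range k, (a + b + c) := by simp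
    rw [genPoch, norm_prod, Nat.cast_prod, hpow, ← Finset.prod_mul_distrib]
    refine Finset.prod_le_prod (fun j _ => norm_nonneg _) fun j hj => ?_
    have h1 : ‖r + s * m + j * (s + t)‖ ≤ a + (m : ℝ) * b + (j : ℝ) * c := by
      refine (norm_add_le _ _).trans ?_
      gcongr
      · refine (norm_add_le _ _).trans ?_
        simp [a, b, norm_mul, mul_comm]
      · simp [c, norm_mul]
    refine h1.trans ?_
    have hjm : (0:ℝ) ≤ (j:ℝ) := Nat.cast_nonneg j
    have hmm : (0:ℝ) ≤ (m:ℝ) := Nat.cast_nonneg m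
    push_cast
    nlinarith
  have hden : ‖genPoch ((m : ℂ) + 1) 1 k * (Nat.factorial k : ℂ)‖ =
      ((∏ j ∈ range k, (m + 1 + j) : ℕ) : ℝ) * (Nat.factorial k : ℝ) := by
    rw [norm_mul, genPoch_nat, Complex.norm_natCast, Complex.norm_natCast]
  have hfac : (0:ℝ) < (Nat.factorial k : ℝ) := by positivity
  have hPpos : (0:ℝ) < ((∏ j ∈ range k, (m + 1 + j) : ℕ) : ℝ) := by exact_mod_cast hP
  rw [norm_mul, norm_div, hden, norm_pow]
  rw [hx, mul_pow, mul_div_assoc]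
  calc ‖genPoch (r + s * m) (s + t) k‖ /
        (((∏ j ∈ range k, (m + 1 + j) : ℕ) : ℝ) * (Nat.factorial k : ℝ)) * ‖z‖ ^ k
      ≤ (((∏ j ∈ range k, (m + 1 + j) : ℕ) : ℝ) * (a + b + c) ^ k) /
        (((∏ j ∈ range k, (m + 1 + j) : ℕ) : ℝ) * (Nat.factorial k : ℝ)) * ‖z‖ ^ k := by
        gcongr
      _ = (a + b + c) ^ k * (‖z‖ ^ k / (Nat.factorial k : ℝ)) := by
        field_simp
end

section
/- Let s,t,r ∈ ℂ and fix z ∈ ℂ. Then the sequence 𝒫(r+sm, s+t | m+1; z) = Σ_{k=0}^∞ (r+sm,s+t)ₖ/((m+1)ₖ k!) · zᵏ converges to e^{sz} as m → ∞. Moreover the convergence is uniform on compact subsets of ℂ. -/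
noncomputable def bb (s t r : ℂ) (m k : ℕ) : ℂ :=
  ∏ j ∈ Finset.range k, ((r + s * m + (j : ℂ) * (s + t)) / ((m : ℂ) + 1 + (j : ℂ)))

lemma calP_eq (s t r : ℂ) (m : ℕ) (z : ℂ) :
    calP s t r m z = ∑' k : ℕ, bb s t r m k / (Nat.factorial k : ℂ) * z ^ k := by
  unfold calP bb genPoch
  congr 1
  funext k
  rw [Finset.prod_div_distrib, div_div]
  simp [mul_one]

lemma norm_den (m j : ℕ) : ‖((m : ℂ) + 1 + (j : ℂ))‖ = (m : ℝ) + 1 + j := by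
  have h : ((m : ℂ) + 1 + (j : ℂ)) = ((m + 1 + j : ℕ) : ℂ) := by push_cast; ring
  rw [h, Complex.norm_natCast]
  push_cast; ring

lemma den_ne_zero (m j : ℕ) : ((m : ℂ) + 1 + (j : ℂ)) ≠ 0 := by
  intro h
  have := norm_den m j
  rw [h, norm_zero] at this
  have h1 : (0:ℝ) < (m : ℝ) + 1 + j := by positivity
  linarith

lemma bb_norm_le (s t r : ℂ) (m k : ℕ) :
    ‖bb s t r m k‖ ≤ max (‖r‖ + ‖s‖) (‖s‖ + ‖t‖) ^ k := by
  set M := max (‖r‖ + ‖s‖) (‖s‖ + ‖t‖) with hM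
  unfold bb
  rw [norm_prod]
  calc ∏ j ∈ Finset.range k, ‖(r + s * m + (j : ℂ) * (s + t)) / ((m : ℂ) + 1 + (j : ℂ))‖
      ≤ ∏ j ∈ Finset.range k, M := by
        apply Finset.prod_le_prod (fun _ _ => norm_nonneg _)
        intro j _
        rw [norm_div, norm_den]
        have hden : (0:ℝ) < (m : ℝ) + 1 + j := by positivity
        rw [div_le_iff₀ hden]
        have h1 : ‖r + s * m + (j : ℂ) * (s + t)‖ ≤ ‖r‖ + ‖s‖ * (m : ℝ) + (j : ℝ) * ‖s + t‖ := by
          calc ‖r + s * m + (j : ℂ) * (s + t)‖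
              ≤ ‖r + s * m‖ + ‖(j : ℂ) * (s + t)‖ := norm_add_le _ _
            _ ≤ (‖r‖ + ‖s * (m : ℂ)‖) + ‖(j : ℂ) * (s + t)‖ := by
                have := norm_add_le r (s * (m : ℂ)); linarith
            _ = ‖r‖ + ‖s‖ * (m : ℝ) + (j : ℝ) * ‖s + t‖ := by
                rw [norm_mul, norm_mul, Complex.norm_natCast, Complex.norm_natCast]
        have h2 : ‖r‖ + ‖s‖ ≤ M := le_max_left _ _
        have h3 : ‖s‖ + ‖t‖ ≤ M := le_max_right _ _
        have h4 : ‖s + t‖ ≤ ‖s‖ + ‖t‖ := norm_add_le _ _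
        have h5 : (0:ℝ) ≤ (m : ℝ) := Nat.cast_nonneg m
        have h6 : (0:ℝ) ≤ (j : ℝ) := Nat.cast_nonneg j
        have h7 : (0:ℝ) ≤ ‖s‖ := norm_nonneg _
        have h8 : (0:ℝ) ≤ ‖r‖ := norm_nonneg _
        have h9 : (0:ℝ) ≤ ‖t‖ := norm_nonneg _
        nlinarith [mul_le_mul_of_nonneg_left h3 h6, mul_le_mul_of_nonneg_right h2 h5]
      _ = M ^ k := by rw [Finset.prod_const, Finset.card_range]

lemma bb_tendsto (s t r : ℂ) (k : ℕ) :
    Filter.Tendsto (fun m : ℕ => bb s t r m k) Filter.atTop (nhds (s ^ k)) := by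
  have hps : (s ^ k) = ∏ _j ∈ Finset.range k, s := by
    rw [Finset.prod_const, Finset.card_range]
  rw [hps]
  unfold bb
  apply tendsto_finset_prod
  intro j _
  have hinv : Filter.Tendsto (fun m : ℕ => ((m : ℂ) + 1 + (j : ℂ))⁻¹) Filter.atTop (nhds 0) := by
    rw [tendsto_zero_iff_norm_tendsto_zero]
    apply squeeze_zero (fun m => norm_nonneg _) (g := fun m : ℕ => 1 / ((m : ℝ) + 1))
    · intro m
      rw [norm_inv, norm_den, one_div]
      apply inv_anti₀ (by positivity)
      have : (0:ℝ) ≤ (j : ℝ) := Nat.cast_nonneg j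
      linarith
    · exact tendsto_one_div_add_atTop_nhds_zero_nat
  have heq : ∀ m : ℕ, (r + s * m + (j : ℂ) * (s + t)) / ((m : ℂ) + 1 + (j : ℂ))
      = s + (r + (j : ℂ) * (s + t) - s * (1 + (j : ℂ))) * ((m : ℂ) + 1 + (j : ℂ))⁻¹ := by
    intro m
    field_simp [den_ne_zero m j]
    ring
  simp_rw [heq]
  have h2 := hinv.const_mul (r + (j : ℂ) * (s + t) - s * (1 + (j : ℂ)))
  simpa using (tendsto_const_nhds (x := s)).add h2

theorem calP_tendsto_exp (s t r : ℂ) :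
    (∀ z : ℂ, Filter.Tendsto (fun m : ℕ => calP s t r m z)
        Filter.atTop (nhds (Complex.exp (s * z)))) ∧
      ∀ K : Set ℂ, IsCompact K →
        TendstoUniformlyOn (fun (m : ℕ) (z : ℂ) => calP s t r m z)
          (fun z => Complex.exp (s * z)) Filter.atTop K := by
  set M := max (‖r‖ + ‖s‖) (‖s‖ + ‖t‖) with hM
  have hM0 : (0:ℝ) ≤ M := le_trans (by positivity) (le_max_left _ _)
  have hsM : ‖s‖ ≤ M := le_trans (by linarith [norm_nonneg t]) (le_max_right _ _)
  have main : ∀ R : ℝ, 0 ≤ R → TendstoUniformlyOn (fun (m : ℕ) (z : ℂ) => calP s t r m z)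
      (fun z => Complex.exp (s * z)) Filter.atTop (Metric.closedBall 0 R) := by
    intro R hR0
    have hsum_dom : Summable (fun k : ℕ => 2 * ((M * R) ^ k / (Nat.factorial k : ℝ))) :=
      (Real.summable_pow_div_factorial (M * R)).mul_left 2
    have hbk : ∀ m k, ‖bb s t r m k - s ^ k‖ ≤ 2 * M ^ k := by
      intro m k
      calc ‖bb s t r m k - s ^ k‖ ≤ ‖bb s t r m k‖ + ‖s ^ k‖ := norm_sub_le _ _
        _ ≤ M ^ k + M ^ k := by
            have h1 := bb_norm_le s t r m k
            have h2 : ‖s ^ k‖ ≤ M ^ k := by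
              rw [norm_pow]; exact pow_le_pow_left₀ (norm_nonneg s) hsM k
            linarith
        _ = 2 * M ^ k := by ring
    have hsumR : ∀ m, Summable (fun k : ℕ => ‖bb s t r m k - s ^ k‖ / (Nat.factorial k : ℝ) * R ^ k) := by
      intro m
      apply Summable.of_nonneg_of_le (fun k => by positivity) ?_ hsum_dom
      intro k
      calc ‖bb s t r m k - s ^ k‖ / (Nat.factorial k : ℝ) * R ^ k
          ≤ (2 * M ^ k) / (Nat.factorial k : ℝ) * R ^ k := by gcongr; exact hbk m k
        _ = 2 * ((M * R) ^ k / (Nat.factorial k : ℝ)) := by rw [mul_pow]; ring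
    have key : Filter.Tendsto
        (fun m : ℕ => ∑' k : ℕ, ‖bb s t r m k - s ^ k‖ / (Nat.factorial k : ℝ) * R ^ k)
        Filter.atTop (nhds 0) := by
      have h0 : (0:ℝ) = ∑' _k : ℕ, (0:ℝ) := by simp
      rw [h0]
      apply tendsto_tsum_of_dominated_convergence hsum_dom
      · intro k
        have h1 : Filter.Tendsto (fun m : ℕ => bb s t r m k - s ^ k) Filter.atTop (nhds 0) := by
          simpa using (bb_tendsto s t r k).sub (tendsto_const_nhds (x := s ^ k))
        have h2 : Filter.Tendsto (fun m : ℕ => ‖bb s t r m k - s ^ k‖) Filter.atTop (nhds 0) := by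
          simpa using h1.norm
        have h3 := h2.mul_const ((Nat.factorial k : ℝ)⁻¹ * R ^ k)
        simpa [div_eq_mul_inv, mul_assoc] using h3
      · filter_upwards with m k
        rw [Real.norm_eq_abs, abs_of_nonneg (by positivity)]
        calc ‖bb s t r m k - s ^ k‖ / (Nat.factorial k : ℝ) * R ^ k
            ≤ (2 * M ^ k) / (Nat.factorial k : ℝ) * R ^ k := by gcongr; exact hbk m k
          _ = 2 * ((M * R) ^ k / (Nat.factorial k : ℝ)) := by rw [mul_pow]; ring
    have est : ∀ m : ℕ, ∀ z ∈ Metric.closedBall (0:ℂ) R,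
        ‖calP s t r m z - Complex.exp (s * z)‖
          ≤ ∑' k : ℕ, ‖bb s t r m k - s ^ k‖ / (Nat.factorial k : ℝ) * R ^ k := by
      intro m z hz
      have hzR : ‖z‖ ≤ R := by simpa using hz
      have hz0 : (0:ℝ) ≤ ‖z‖ := norm_nonneg z
      have hnorm_term : ∀ (c : ℂ) (k : ℕ), ‖c / (Nat.factorial k : ℂ) * z ^ k‖
          = ‖c‖ / (Nat.factorial k : ℝ) * ‖z‖ ^ k := by
        intro c k
        rw [norm_mul, norm_div, Complex.norm_natCast, norm_pow]
      have hsum1 : Summable (fun k : ℕ => bb s t r m k / (Nat.factorial k : ℂ) * z ^ k) := by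
        apply Summable.of_norm
        apply Summable.of_nonneg_of_le (fun k => norm_nonneg _) ?_
          (Real.summable_pow_div_factorial (M * R))
        intro k
        rw [hnorm_term]
        calc ‖bb s t r m k‖ / (Nat.factorial k : ℝ) * ‖z‖ ^ k
            ≤ M ^ k / (Nat.factorial k : ℝ) * R ^ k := by
              gcongr
              exact bb_norm_le s t r m k
          _ = (M * R) ^ k / (Nat.factorial k : ℝ) := by rw [mul_pow]; ring
      have hsum2 : Summable (fun k : ℕ => (s ^ k) / (Nat.factorial k : ℂ) * z ^ k) := by
        apply Summable.of_norm
        apply Summable.of_nonneg_of_le (fun k => norm_nonneg _) ?_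
          (Real.summable_pow_div_factorial (M * R))
        intro k
        rw [hnorm_term]
        calc ‖s ^ k‖ / (Nat.factorial k : ℝ) * ‖z‖ ^ k
            ≤ M ^ k / (Nat.factorial k : ℝ) * R ^ k := by
              rw [norm_pow]
              gcongr
          _ = (M * R) ^ k / (Nat.factorial k : ℝ) := by rw [mul_pow]; ring
      have hexp : Complex.exp (s * z) = ∑' k : ℕ, (s ^ k) / (Nat.factorial k : ℂ) * z ^ k := by
        rw [Complex.exp_eq_exp_ℂ, NormedSpace.exp_eq_tsum_div]
        show ∑' n : ℕ, (s * z) ^ n / (Nat.factorial n : ℂ) = _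
        exact tsum_congr fun k => by rw [mul_pow]; ring
      rw [calP_eq, hexp, ← Summable.tsum_sub hsum1 hsum2]
      have hdiff : ∀ k : ℕ, bb s t r m k / (Nat.factorial k : ℂ) * z ^ k
          - (s ^ k) / (Nat.factorial k : ℂ) * z ^ k
          = (bb s t r m k - s ^ k) / (Nat.factorial k : ℂ) * z ^ k := by
        intro k; ring
      simp_rw [hdiff]
      have hsum3 : Summable (fun k : ℕ => ‖(bb s t r m k - s ^ k) / (Nat.factorial k : ℂ) * z ^ k‖) := by
        apply Summable.of_nonneg_of_le (fun k => norm_nonneg _) ?_ hsum_dom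
        intro k
        rw [hnorm_term]
        calc ‖bb s t r m k - s ^ k‖ / (Nat.factorial k : ℝ) * ‖z‖ ^ k
            ≤ (2 * M ^ k) / (Nat.factorial k : ℝ) * R ^ k := by gcongr; exact hbk m k
          _ = 2 * ((M * R) ^ k / (Nat.factorial k : ℝ)) := by rw [mul_pow]; ring
      calc ‖∑' k : ℕ, (bb s t r m k - s ^ k) / (Nat.factorial k : ℂ) * z ^ k‖
          ≤ ∑' k : ℕ, ‖(bb s t r m k - s ^ k) / (Nat.factorial k : ℂ) * z ^ k‖ :=
            norm_tsum_le_tsum_norm hsum3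
        _ ≤ ∑' k : ℕ, ‖bb s t r m k - s ^ k‖ / (Nat.factorial k : ℝ) * R ^ k := by
            apply Summable.tsum_le_tsum ?_ hsum3 (hsumR m)
            intro k
            rw [hnorm_term]
            gcongr
    rw [Metric.tendstoUniformlyOn_iff]
    intro ε hε
    filter_upwards [key.eventually_lt_const hε] with m hm z hz
    rw [dist_eq_norm, norm_sub_rev]
    exact lt_of_le_of_lt (est m z hz) hm
  constructor
  · intro z
    exact (main ‖z‖ (norm_nonneg z)).tendsto_at (by simp)
  · intro K hK
    obtain ⟨R, hKR⟩ := hK.isBounded.subset_closedBall 0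
    exact (main (max R 0) (le_max_right _ _)).mono
      (hKR.trans (Metric.closedBall_subset_closedBall (le_max_left _ _)))
end
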